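/- Let P₁, P₂ be vertex sequences forming paths in an undirected positively-weighted graph such that P₁ is a shortest path visiting u, v, w in that order (u, v, w distinct), and P₂ is a shortest path visiting v, w, u in that order. Then a contradiction follows; i.e., no such pair of shortest paths exists. -/

import Mathlib

/-!
A segment of a shortest path is no heavier than any walk between its endpoints: splice the walk
into the path, then shorten the result to a path by cutting out cycles, which have nonnegative
weight. In an undirected graph a walk can be read backwards, so the `u`–`v`–`w` segment of `P₁` is
no heavier than the `w`–`u` segment of `P₂`, and the `v`–`w`–`u` segment of `P₂` is no heavier
than the `u`–`v` segment of `P₁`. Adding the two inequalities, the `v`–`w` segments of `P₁` and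
`P₂` would have total weight at most `0`, but each has positive weight.
-/

/-- A graph with real edge weights that are strictly positive on edges. -/
structure WeightedGraph (V : Type*) where
  Adj : V → V → Prop
  w : V → V → ℝ
  pos : ∀ {u v : V}, Adj u v → 0 < w u v

namespace WeightedGraph

variable {V : Type*} (G : WeightedGraph V)

/-- The graph is undirected: adjacency and weights are symmetric. -/
def IsUndirected : Prop :=
  (∀ u v, G.Adj u v → G.Adj v u) ∧ (∀ u v, G.w u v = G.w v u)

/-- Total weight of a vertex sequence (sum of weights of consecutive pairs). -/
def weight (l : List V) : ℝ :=
  ((l.zip l.tail).map fun p => G.w p.1 p.2).sum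

/-- A (simple) path: a nonempty sequence of distinct vertices with consecutive
vertices adjacent. -/
def IsPath (l : List V) : Prop :=
  l ≠ [] ∧ l.Chain' G.Adj ∧ l.Nodup

/-- A path beginning at `u` and ending at `v`. -/
def IsPathFrom (l : List V) (u v : V) : Prop :=
  G.IsPath l ∧ l.head? = some u ∧ l.getLast? = some v

/-- A shortest path between its endpoints: a path whose total weight is at most
that of any path with the same endpoints. -/
def IsShortest (l : List V) : Prop :=
  G.IsPath l ∧ ∀ l', G.IsPath l' → l'.head? = l.head? → l'.getLast? = l.getLast? →
    G.weight l ≤ G.weight l'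

/-- Weighted graph distance from `u` to `v`. -/
noncomputable def dist (u v : V) : ℝ :=
  sInf {c : ℝ | ∃ l, G.IsPathFrom l u v ∧ G.weight l = c}

end WeightedGraph

/-- `v` is the first vertex of `P` lying in the set `S`. -/
def FirstIn {V : Type*} (P : List V) (S : Set V) (v : V) : Prop :=
  v ∈ S ∧ ∃ pre post : List V, P = pre ++ v :: post ∧ ∀ x ∈ pre, x ∉ S

/-- `v` is the last vertex of `P` lying in the set `S`. -/
def LastIn {V : Type*} (P : List V) (S : Set V) (v : V) : Prop :=
  v ∈ S ∧ ∃ pre post : List V, P = pre ++ v :: post ∧ ∀ x ∈ post, x ∉ S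

namespace List

variable {α : Type*}

theorem exists_eq_append_cons_of_cons_sublist {a : α} {l l' : List α} (h : a :: l <+ l') :
    ∃ p q, l' = p ++ a :: q ∧ l <+ q := by
  obtain ⟨r₁, r₂, rfl, ha, hl⟩ := cons_sublist_iff.mp h
  obtain ⟨s, t, rfl⟩ := append_of_mem ha
  exact ⟨s, t ++ r₂, by simp, hl.trans (sublist_append_right t r₂)⟩

theorem exists_eq_of_pair_sublist {a b : α} {l : List α} (h : [a, b] <+ l) :
    ∃ l₀ l₁ l₂, l = l₀ ++ a :: (l₁ ++ b :: l₂) := by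
  obtain ⟨l₀, r, rfl, hb⟩ := exists_eq_append_cons_of_cons_sublist h
  obtain ⟨l₁, l₂, rfl, -⟩ := exists_eq_append_cons_of_cons_sublist hb
  exact ⟨l₀, l₁, l₂, rfl⟩

theorem exists_eq_of_triple_sublist {a b c : α} {l : List α} (h : [a, b, c] <+ l) :
    ∃ l₀ l₁ l₂ l₃, l = l₀ ++ a :: (l₁ ++ b :: (l₂ ++ c :: l₃)) := by
  obtain ⟨l₀, r, rfl, hbc⟩ := exists_eq_append_cons_of_cons_sublist h
  obtain ⟨l₁, l₂, l₃, rfl⟩ := exists_eq_of_pair_sublist hbc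
  exact ⟨l₀, l₁, l₂, l₃, rfl⟩

end List

namespace WeightedGraph

open List

variable {V : Type*} (G : WeightedGraph V)

theorem weight_cons_cons (a b : V) (l : List V) :
    G.weight (a :: b :: l) = G.w a b + G.weight (b :: l) := rfl

@[simp]
theorem weight_singleton (a : V) : G.weight [a] = 0 := rfl

theorem weight_append_cons : ∀ (l₁ : List V) (x : V) (l₂ : List V),
    G.weight (l₁ ++ x :: l₂) = G.weight (l₁ ++ [x]) + G.weight (x :: l₂)
  | [], _, _ => (zero_add _).symm
  | [_], _, _ => by simp only [cons_append, nil_append, weight_cons_cons, weight_singleton]; ring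
  | a :: b :: l₁, x, l₂ => by
    have ih := weight_append_cons (b :: l₁) x l₂
    simp only [cons_append] at ih ⊢
    rw [weight_cons_cons, ih, weight_cons_cons, add_assoc]

theorem weight_cons_append_cons (a : V) (l₁ : List V) (x : V) (l₂ : List V) :
    G.weight (a :: (l₁ ++ x :: l₂)) = G.weight (a :: (l₁ ++ [x])) + G.weight (x :: l₂) :=
  G.weight_append_cons (a :: l₁) x l₂

theorem weight_nonneg : ∀ {l : List V}, l.IsChain G.Adj → 0 ≤ G.weight l
  | [], _ | [_], _ => le_rfl
  | _ :: _ :: _, h => by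
    rw [isChain_cons_cons] at h
    rw [weight_cons_cons]
    exact add_nonneg (G.pos h.1).le (weight_nonneg h.2)

theorem weight_pos {a : V} {l : List V} (h : (a :: l).IsChain G.Adj) (hl : l ≠ []) :
    0 < G.weight (a :: l) := by
  obtain ⟨b, l, rfl⟩ := exists_cons_of_ne_nil hl
  rw [isChain_cons_cons] at h
  rw [weight_cons_cons]
  exact add_pos_of_pos_of_nonneg (G.pos h.1) (G.weight_nonneg h.2)

theorem weight_reverse (hw : ∀ u v, G.w u v = G.w v u) : ∀ l : List V,
    G.weight l.reverse = G.weight l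
  | [] | [_] => rfl
  | a :: b :: l => by
    have : (a :: b :: l).reverse = l.reverse ++ [b, a] := by simp
    rw [this, weight_append_cons, ← reverse_cons, weight_reverse hw (b :: l), weight_cons_cons,
      weight_cons_cons, weight_singleton, hw b a]
    ring

theorem exists_isPath_weight_le {l : List V} (hl : l.IsChain G.Adj) (hne : l ≠ []) :
    ∃ p, G.IsPath p ∧ p.head? = l.head? ∧ p.getLast? = l.getLast? ∧ G.weight p ≤ G.weight l := by
  by_cases hnd : l.Nodup
  · exact ⟨l, ⟨hne, hl, hnd⟩, rfl, rfl, le_rfl⟩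
  obtain ⟨x, hx⟩ := exists_duplicate_iff_not_nodup.mpr hnd
  obtain ⟨pre, cyc, post, hsplit⟩ := exists_eq_of_pair_sublist (duplicate_iff_sublist.mp hx)
  rw [hsplit, isChain_split, isChain_cons_split] at hl
  obtain ⟨hpre, hcyc, hpost⟩ := hl
  have hshort : (pre ++ x :: post).IsChain G.Adj := isChain_split.mpr ⟨hpre, hpost⟩
  obtain ⟨p, hp, hhead, hlast, hweight⟩ := exists_isPath_weight_le hshort (by simp)
  refine ⟨p, hp, by simp [hhead, hsplit], by rw [hlast, hsplit]; simp [getLast?_cons], ?_⟩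
  have hcyc_nonneg := G.weight_nonneg hcyc
  rw [weight_append_cons] at hweight
  rw [hsplit, weight_append_cons, weight_cons_append_cons]
  linarith
termination_by l.length
decreasing_by rw [hsplit]; simp

variable {G}

theorem IsShortest.weight_segment_le {A m q B : List V} {a b : V}
    (hP : G.IsShortest (A ++ a :: (m ++ b :: B))) (hq : (a :: (q ++ [b])).IsChain G.Adj) :
    G.weight (a :: (m ++ [b])) ≤ G.weight (a :: (q ++ [b])) := by
  have hP' : (A ++ a :: (m ++ b :: B)).IsChain G.Adj := hP.1.2.1
  rw [isChain_split, isChain_cons_split] at hP'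
  obtain ⟨hA, -, hB⟩ := hP'
  have hW : (A ++ a :: (q ++ b :: B)).IsChain G.Adj := by
    rw [isChain_split, isChain_cons_split]
    exact ⟨hA, hq, hB⟩
  obtain ⟨p, hp, hhead, hlast, hweight⟩ := G.exists_isPath_weight_le hW (by simp)
  have hle := hP.2 p hp (by simp [hhead]) (by rw [hlast]; simp [getLast?_cons])
  rw [weight_append_cons, weight_cons_append_cons] at hle hweight
  linarith

theorem IsShortest.weight_add_weight_le (hG : G.IsUndirected) {A m₁ m₂ q B : List V} {a b c : V}
    (hP : G.IsShortest (A ++ a :: (m₁ ++ b :: (m₂ ++ c :: B))))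
    (hq : (c :: (q ++ [a])).IsChain G.Adj) :
    G.weight (a :: (m₁ ++ [b])) + G.weight (b :: (m₂ ++ [c])) ≤ G.weight (c :: (q ++ [a])) := by
  have hrev : (c :: (q ++ [a])).reverse = a :: (q.reverse ++ [c]) := by simp
  have hq' : (a :: (q.reverse ++ [c])).IsChain G.Adj := by
    rw [← hrev, isChain_reverse]
    exact hq.imp fun x y => hG.1 x y
  have hP' : G.IsShortest (A ++ a :: ((m₁ ++ b :: m₂) ++ c :: B)) := by simpa using hP
  have hle := hP'.weight_segment_le hq'
  rw [append_assoc, cons_append, weight_cons_append_cons] at hle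
  rwa [← G.weight_reverse hG.2 (c :: (q ++ [a])), hrev]

end WeightedGraph

theorem no_cyclically_ordered_shortest_paths_general {V : Type*} (G : WeightedGraph V)
    (hG : G.IsUndirected) (P₁ P₂ : List V) (u v w : V)
    (h₁ : G.IsShortest P₁) (h₂ : G.IsShortest P₂)
    (hseq₁ : List.Sublist [u, v, w] P₁) (hseq₂ : List.Sublist [v, w, u] P₂) : False := by
  obtain ⟨s₀, s₁, s₂, s₃, rfl⟩ := List.exists_eq_of_triple_sublist hseq₁
  obtain ⟨t₀, t₁, t₂, t₃, rfl⟩ := List.exists_eq_of_triple_sublist hseq₂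
  have hc₁ : (s₀ ++ u :: (s₁ ++ v :: (s₂ ++ w :: s₃))).IsChain G.Adj := h₁.1.2.1
  have hc₂ : (t₀ ++ v :: (t₁ ++ w :: (t₂ ++ u :: t₃))).IsChain G.Adj := h₂.1.2.1
  have huv₁ : (u :: (s₁ ++ [v])).IsChain G.Adj := hc₁.infix ⟨s₀, s₂ ++ w :: s₃, by simp⟩
  have hvw₁ : (v :: (s₂ ++ [w])).IsChain G.Adj := hc₁.infix ⟨s₀ ++ u :: s₁, s₃, by simp⟩
  have hvw₂ : (v :: (t₁ ++ [w])).IsChain G.Adj := hc₂.infix ⟨t₀, t₂ ++ u :: t₃, by simp⟩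
  have hwu₂ : (w :: (t₂ ++ [u])).IsChain G.Adj := hc₂.infix ⟨t₀ ++ v :: t₁, t₃, by simp⟩
  have h₁uw := h₁.weight_add_weight_le hG hwu₂
  have h₂vu := h₂.weight_add_weight_le hG huv₁
  have hpos₁ := G.weight_pos hvw₁ (by simp)
  have hpos₂ := G.weight_pos hvw₂ (by simp)
  linarith

/-- In an undirected positively-weighted graph, there is no pair of shortest paths
`P₁`, `P₂` with distinct vertices `u`, `v`, `w` such that `P₁` visits `u, v, w` in
that order and `P₂` visits `v, w, u` in that order. -/
theorem no_cyclically_ordered_shortest_paths {V : Type*} (G : WeightedGraph V)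
    (hG : G.IsUndirected) (P₁ P₂ : List V) (u v w : V)
    (huv : u ≠ v) (hvw : v ≠ w) (huw : u ≠ w)
    (h₁ : G.IsShortest P₁) (h₂ : G.IsShortest P₂)
    (hseq₁ : List.Sublist [u, v, w] P₁) (hseq₂ : List.Sublist [v, w, u] P₂) : False :=
  no_cyclically_ordered_shortest_paths_general G hG P₁ P₂ u v w h₁ h₂ hseq₁ hseq₂
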